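/- The 4×4 matrix M with rows (1,−1,0,1), (−1,2,1,0), (0,1,1,1), (1,0,1,2) is positive semidefinite of rank 2, has zeros at the two nonedges {1,3} and {2,4} of the 4-cycle, and is extremal in S^4_{⪰0}(C_4). -/

import Mathlib

/-!
`M12 = Fᵀ F` for the `2 × 4` matrix `F` with rows `(1,-1,0,1)` and `(0,1,1,1)`; these rows are
orthogonal of squared length `3`, so `F Fᵀ = 3 • 1` and `M12` is positive semidefinite of
rank 2.
If `M12 = A + B` with `A, B` positive semidefinite, then `xᵀ A x + xᵀ B x = 0` for every `x` in
the kernel of `M12`, so that kernel lies in the kernels of `A` and `B`. For `A` in the cone, the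
two kernel vectors `(1,1,-1,0)` and `(-1,0,-1,1)`, the symmetry of `A` and the two zeros at the
nonedges give a linear system whose solutions are exactly the multiples of `M12`.
-/

open Matrix BigOperators

/-- The cone of real positive semidefinite matrices with zeros at nonedges of a graph
with adjacency relation `Adj`. -/
def psdCone {n : Type*} [Fintype n] (Adj : n → n → Prop) : Set (Matrix n n ℝ) :=
  {X | X.PosSemidef ∧ ∀ i j, i ≠ j → ¬ Adj i j → X i j = 0}

/-- `X` lies on an extreme ray of the convex cone `S`: it belongs to `S` and whenever
`X = A + B` with `A, B ∈ S`, both `A` and `B` are nonnegative multiples of `X`. -/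
def IsExtremalIn {n : Type*} [Fintype n] (S : Set (Matrix n n ℝ)) (X : Matrix n n ℝ) : Prop :=
  X ∈ S ∧ ∀ A B : Matrix n n ℝ, A ∈ S → B ∈ S → X = A + B →
    (∃ c : ℝ, 0 ≤ c ∧ A = c • X) ∧ (∃ d : ℝ, 0 ≤ d ∧ B = d • X)

/-- The cone `S^4_⪰0(C_4)` of PSD matrices vanishing at the nonedges `{1,3}` and `{2,4}`
of the 4-cycle (0-based: entries `(0,2)` and `(1,3)`). -/
def c4Cone : Set (Matrix (Fin 4) (Fin 4) ℝ) :=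
  {X | X.PosSemidef ∧ X 0 2 = 0 ∧ X 2 0 = 0 ∧ X 1 3 = 0 ∧ X 3 1 = 0}

def M12 : Matrix (Fin 4) (Fin 4) ℝ :=
  !![1, -1, 0, 1; -1, 2, 1, 0; 0, 1, 1, 1; 1, 0, 1, 2]

open scoped ComplexOrder in
theorem Matrix.PosSemidef.mulVec_eq_zero_of_add {𝕜 n : Type*} [RCLike 𝕜] [Fintype n]
    {A B : Matrix n n 𝕜} (hA : A.PosSemidef) (hB : B.PosSemidef) {x : n → 𝕜}
    (hx : (A + B) *ᵥ x = 0) : A *ᵥ x = 0 := by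
  have hsum : star x ⬝ᵥ A *ᵥ x + star x ⬝ᵥ B *ᵥ x = 0 := by
    rw [← dotProduct_add, ← add_mulVec, hx, dotProduct_zero]
  exact (hA.dotProduct_mulVec_zero_iff x).mp <|
    ((add_eq_zero_iff_of_nonneg (hA.dotProduct_mulVec_nonneg x)
      (hB.dotProduct_mulVec_nonneg x)).mp hsum).1

theorem isExtremalIn_of_ker_le {n : Type*} [Fintype n] {S : Set (Matrix n n ℝ)}
    {X : Matrix n n ℝ} (hS : ∀ A ∈ S, A.PosSemidef) (hX : X ∈ S)
    (h : ∀ A ∈ S, LinearMap.ker X.mulVecLin ≤ LinearMap.ker A.mulVecLin →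
      ∃ c : ℝ, 0 ≤ c ∧ A = c • X) :
    IsExtremalIn S X := by
  refine ⟨hX, fun A B hA hB hAB => ⟨h A hA fun x hx => ?_, h B hB fun x hx => ?_⟩⟩
  · exact (hS A hA).mulVec_eq_zero_of_add (hS B hB) (hAB ▸ hx)
  · exact (hS B hB).mulVec_eq_zero_of_add (hS A hA) (add_comm A B ▸ hAB ▸ hx)

def m12Factor : Matrix (Fin 2) (Fin 4) ℝ :=
  !![1, -1, 0, 1; 0, 1, 1, 1]

theorem M12_eq_conjTranspose_mul_self : M12 = m12Factorᴴ * m12Factor := by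
  ext i j
  fin_cases i <;> fin_cases j <;> simp [M12, m12Factor, mul_apply, Fin.sum_univ_two] <;> norm_num

theorem m12Factor_mul_conjTranspose : m12Factor * m12Factorᴴ = (3 : ℝ) • 1 := by
  ext i j
  fin_cases i <;> fin_cases j <;> simp [m12Factor, mul_apply, Fin.sum_univ_four] <;> norm_num

theorem M12_posSemidef : M12.PosSemidef :=
  M12_eq_conjTranspose_mul_self ▸ posSemidef_conjTranspose_mul_self m12Factor

theorem M12_rank : M12.rank = 2 := by
  rw [M12_eq_conjTranspose_mul_self, rank_conjTranspose_mul_self,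
    ← rank_self_mul_conjTranspose, m12Factor_mul_conjTranspose,
    rank_smul_of_mem_nonZeroDivisors _ (mem_nonZeroDivisors_of_ne_zero three_ne_zero), rank_one,
    Fintype.card_fin]

theorem M12_mem_c4Cone : M12 ∈ c4Cone :=
  ⟨M12_posSemidef, by simp [M12]⟩

theorem M12_mulVec_ker₁ : M12 *ᵥ ![1, 1, -1, 0] = 0 := by
  ext i
  fin_cases i <;>
    norm_num [M12, mulVec, dotProduct, Fin.sum_univ_four, cons_val_two, cons_val_three]

theorem M12_mulVec_ker₂ : M12 *ᵥ ![-1, 0, -1, 1] = 0 := by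
  ext i
  fin_cases i <;>
    norm_num [M12, mulVec, dotProduct, Fin.sum_univ_four, cons_val_two, cons_val_three]

theorem eq_smul_M12_of_mem_c4Cone {A : Matrix (Fin 4) (Fin 4) ℝ} (hA : A ∈ c4Cone)
    (h₁ : A *ᵥ ![1, 1, -1, 0] = 0) (h₂ : A *ᵥ ![-1, 0, -1, 1] = 0) : A = A 0 0 • M12 := by
  obtain ⟨hpsd, h02, h20, h13, h31⟩ := hA
  have hsymm (i j : Fin 4) : A j i = A i j := by simpa using hpsd.isHermitian.apply i j
  have e₁ (i : Fin 4) : A i 0 + A i 1 - A i 2 = 0 := by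
    simpa [mulVec, dotProduct, Fin.sum_univ_four, sub_eq_add_neg] using congrFun h₁ i
  have e₂ (i : Fin 4) : -A i 0 - A i 2 + A i 3 = 0 := by
    simpa [mulVec, dotProduct, Fin.sum_univ_four, sub_eq_add_neg] using congrFun h₂ i
  ext i j
  fin_cases i <;> fin_cases j <;> simp [M12] <;>
    linarith [e₁ 0, e₁ 1, e₁ 2, e₁ 3, e₂ 0, e₂ 1, e₂ 2, e₂ 3,
      hsymm 0 1, hsymm 0 3, hsymm 1 2, hsymm 2 3]

theorem M12_extremal :
    M12.PosSemidef ∧ M12.rank = 2 ∧ M12 0 2 = 0 ∧ M12 1 3 = 0 ∧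
      IsExtremalIn c4Cone M12 := by
  refine ⟨M12_posSemidef, M12_rank, M12_mem_c4Cone.2.1, M12_mem_c4Cone.2.2.2.1, ?_⟩
  refine isExtremalIn_of_ker_le (fun A hA => hA.1) M12_mem_c4Cone fun A hA hker => ?_
  exact ⟨A 0 0, hA.1.diag_nonneg,
    eq_smul_M12_of_mem_c4Cone hA (hker M12_mulVec_ker₁) (hker M12_mulVec_ker₂)⟩
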